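/- arXiv:math/0401164 — 7 statements merged into one kernel-verified Lean document; each statement's English description precedes it below -/
import Mathlib

section
/- Let n and m be natural numbers with n ≥ 2 and m ≥ 1, and set k = 1 − n + (m + 1)/(n − 1) (as a real or rational number). Then c_n(k) − 1 = c_{m+1, m+n}(m), where c_n(k) = −((k + n)(n − 1) − n)·((k + n)(n − 2)·n − n² + 1)/(k + n) and c_{p,p'}(m) = 2m³ − m − 1 − (m − 1)m(m + 1)·(p'/p) − (m − 1)m(m + 1)·(p/p'). -/
/-!
At `k = 1 - n + (m+1)/(n-1)` the shifted level is `k + n = (m+n)/(n-1)`, so `(k+n)(n-1) - n = m`.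
With the shifted level expressed through `m` and `n`, both sides become rational functions of
`m` and `n` with denominators `n - 1`, `m + 1` and `m + n`, and clearing these reduces the
identity to a polynomial one.
-/

variable {K : Type*} [Field K]

/-- The central charge `c_n(k)` of the Virasoro subalgebra of `W^{(2)}_n(k)`. -/
def wAlgebraCentralCharge (n k : K) : K :=
  -(((k + n) * (n - 1) - n) * ((k + n) * (n - 2) * n - n ^ 2 + 1)) / (k + n)

/-- The central charge `c_{p,p'}(m)` of the `(p,p')` minimal model of `W sl(m)`. -/
def minimalModelCentralCharge (p p' m : K) : K :=
  2 * m ^ 3 - m - 1 - (m - 1) * m * (m + 1) * (p' / p) - (m - 1) * m * (m + 1) * (p / p')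

theorem shifted_level_eq (n m : K) (hn : n - 1 ≠ 0) :
    (1 - n + (m + 1) / (n - 1)) + n = (m + n) / (n - 1) := by
  field_simp
  ring

theorem wAlgebraCentralCharge_sub_one_eq_minimalModelCentralCharge (n m : K)
    (hn : n - 1 ≠ 0) (hm : m + 1 ≠ 0) (hmn : m + n ≠ 0) :
    wAlgebraCentralCharge n (1 - n + (m + 1) / (n - 1)) - 1
      = minimalModelCentralCharge (m + 1) (m + n) m := by
  unfold wAlgebraCentralCharge minimalModelCentralCharge
  rw [shifted_level_eq n m hn]
  field_simp
  ring

theorem central_charge_rank_level_duality_general (n m : ℕ) (hn : 2 ≤ n)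
    (k : ℝ) (hk : k = 1 - (n : ℝ) + ((m : ℝ) + 1) / ((n : ℝ) - 1)) :
    -(((k + n) * ((n : ℝ) - 1) - n) * ((k + n) * ((n : ℝ) - 2) * n - (n : ℝ) ^ 2 + 1))
        / (k + n) - 1
      = 2 * (m : ℝ) ^ 3 - m - 1
        - ((m : ℝ) - 1) * m * (m + 1) * (((m : ℝ) + n) / ((m : ℝ) + 1))
        - ((m : ℝ) - 1) * m * (m + 1) * (((m : ℝ) + 1) / ((m : ℝ) + n)) := by
  have hn' : (2 : ℝ) ≤ n := by exact_mod_cast hn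
  subst hk
  exact wAlgebraCentralCharge_sub_one_eq_minimalModelCentralCharge (n : ℝ) m
    (by linarith) (by positivity) (by positivity)

/-- Rank–level duality of central charges: for `k = 1 - n + (m+1)/(n-1)`,
one has `c_n(k) - 1 = c_{m+1, m+n}(m)`, where
`c_n(k) = -((k+n)(n-1) - n)((k+n)(n-2)n - n² + 1)/(k+n)` and
`c_{p,p'}(m) = 2m³ - m - 1 - (m-1)m(m+1)(p'/p) - (m-1)m(m+1)(p/p')`. -/
theorem central_charge_rank_level_duality (n m : ℕ) (hn : 2 ≤ n) (hm : 1 ≤ m)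
    (k : ℝ) (hk : k = 1 - (n : ℝ) + ((m : ℝ) + 1) / ((n : ℝ) - 1)) :
    -(((k + n) * ((n : ℝ) - 1) - n) * ((k + n) * ((n : ℝ) - 2) * n - (n : ℝ) ^ 2 + 1))
        / (k + n) - 1
      = 2 * (m : ℝ) ^ 3 - m - 1
        - ((m : ℝ) - 1) * m * (m + 1) * (((m : ℝ) + n) / ((m : ℝ) + 1))
        - ((m : ℝ) - 1) * m * (m + 1) * (((m : ℝ) + 1) / ((m : ℝ) + n)) :=
  central_charge_rank_level_duality_general n m hn k hk
end

section
/- Let n ≥ 2 be a natural number, k ∈ ℂ, and let G be the n×n complex matrix with entries (indices 1,…,n): G_{i,i} = 2(k + n) for 1 ≤ i ≤ n − 1, G_{n,n} = 1, G_{i,i+1} = G_{i+1,i} = −(k + n) for 1 ≤ i ≤ n − 1, and all other entries 0. Then det G = −(k + n)^{n−1} · n · ℓ_n(k), where ℓ_n(k) = ((n − 1)/n)·k + n − 2. -/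
/-!
The matrix is tridiagonal, and Laplace expansion of a tridiagonal determinant along its last
row gives the three-term recurrence `Dₘ₊₂ = aₘ₊₁ Dₘ₊₁ - bₘ cₘ Dₘ`. With `t = k + n`, the
leading `m × m` block is `t` times the Cartan matrix of type `Aₘ`, of determinant
`(m + 1) tᵐ`; one more step of the recurrence, with last diagonal entry `1`, gives
`det G = tⁿ⁻¹ (n - (n - 1) t)`.
-/

namespace Matrix

variable {R : Type*} [CommRing R]

/-- The sequences are indexed by `ℕ`, so that the matrices `tridiagonal a b c n` are the leading
principal submatrices of a single infinite tridiagonal matrix. -/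
def tridiagonal (a b c : ℕ → R) (n : ℕ) : Matrix (Fin n) (Fin n) R :=
  of fun i j =>
    if (i : ℕ) = j then a i
    else if (i : ℕ) + 1 = j then b i
    else if (j : ℕ) + 1 = i then c j
    else 0

section Tridiagonal

variable (a b c : ℕ → R)

theorem tridiagonal_congr {a' b' c' : ℕ → R} {n : ℕ} (ha : ∀ i < n, a i = a' i)
    (hb : ∀ i < n, b i = b' i) (hc : ∀ i < n, c i = c' i) :
    tridiagonal a b c n = tridiagonal a' b' c' n := by
  ext i j
  simp only [tridiagonal, of_apply, ha i i.isLt, hb i i.isLt, hc j j.isLt]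

theorem tridiagonal_submatrix_castSucc (n : ℕ) :
    (tridiagonal a b c (n + 1)).submatrix Fin.castSucc Fin.castSucc = tridiagonal a b c n := by
  ext i j
  simp [tridiagonal]

theorem tridiagonal_apply_self {n : ℕ} (i : Fin n) : tridiagonal a b c n i i = a i := by
  simp [tridiagonal]

theorem tridiagonal_apply_of_succ_eq {n : ℕ} {i j : Fin n} (h : (i : ℕ) + 1 = j) :
    tridiagonal a b c n i j = b i := by
  simp only [tridiagonal, of_apply, h, if_true]
  rw [if_neg (by omega)]

theorem tridiagonal_apply_of_eq_succ {n : ℕ} {i j : Fin n} (h : (j : ℕ) + 1 = i) :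
    tridiagonal a b c n i j = c j := by
  simp only [tridiagonal, of_apply, h, if_true]
  rw [if_neg (by omega), if_neg (by omega)]

theorem tridiagonal_apply_eq_zero {n : ℕ} {i j : Fin n}
    (hij : (i : ℕ) + 1 < j ∨ (j : ℕ) + 1 < i) : tridiagonal a b c n i j = 0 := by
  simp only [tridiagonal, of_apply]
  split_ifs <;> first | rfl | omega

theorem det_tridiagonal_succ_succ (n : ℕ) :
    (tridiagonal a b c (n + 2)).det =
      a (n + 1) * (tridiagonal a b c (n + 1)).det - b n * c n * (tridiagonal a b c n).det := by
  -- the minor of the entry `(n + 1, n)` has `b n` as the only nonzero entry of its last column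
  have hminor : ((tridiagonal a b c (n + 2)).submatrix Fin.castSucc
      (Fin.last n).castSucc.succAbove).det = b n * (tridiagonal a b c n).det := by
    rw [det_succ_column _ (Fin.last n), Fin.sum_univ_castSucc, Finset.sum_eq_zero, zero_add]
    · have hsub : ((tridiagonal a b c (n + 2)).submatrix Fin.castSucc
          (Fin.last n).castSucc.succAbove).submatrix (Fin.last n).succAbove
          (Fin.last n).succAbove = tridiagonal a b c n := by
        ext i j
        simp [tridiagonal, Fin.succAbove]
      rw [hsub]
      simp [tridiagonal_apply_of_succ_eq, ← two_mul, pow_mul]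
    · intro i _
      rw [submatrix_apply, tridiagonal_apply_eq_zero _ _ _ (by simp), mul_zero, zero_mul]
  rw [det_succ_row _ (Fin.last (n + 1)), Fin.sum_univ_castSucc, Fin.sum_univ_castSucc,
    Finset.sum_eq_zero, zero_add]
  · simp only [Fin.val_last, Fin.val_castSucc, odd_add_one_self, Odd.neg_one_pow,
      tridiagonal_apply_of_eq_succ, Fin.succAbove_last, hminor, Even.add_self, Even.neg_pow,
      one_pow, tridiagonal_apply_self, tridiagonal_submatrix_castSucc]
    ring
  · intro j _
    rw [tridiagonal_apply_eq_zero _ _ _ (by simp), mul_zero, zero_mul]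

end Tridiagonal

theorem det_tridiagonal_cartanA (t : R) : ∀ m : ℕ,
    (tridiagonal (fun _ => 2 * t) (fun _ => -t) (fun _ => -t) m).det = (m + 1) * t ^ m
  | 0 => by simp
  | 1 => by
    rw [det_unique, tridiagonal_apply_self]
    push_cast
    ring
  | m + 2 => by
    rw [det_tridiagonal_succ_succ, det_tridiagonal_cartanA t (m + 1), det_tridiagonal_cartanA t m]
    push_cast
    ring

theorem det_tridiagonal_update_last (t d : R) : ∀ m : ℕ,
    (tridiagonal (Function.update (fun _ => 2 * t) m d) (fun _ => -t) (fun _ => -t) (m + 1)).det =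
      d * (m + 1) * t ^ m - m * t ^ (m + 1)
  | 0 => by simp [det_unique, tridiagonal_apply_self]
  | m + 1 => by
    have hcongr : ∀ l ≤ m + 1,
        tridiagonal (Function.update (fun _ => 2 * t) (m + 1) d) (fun _ => -t) (fun _ => -t) l =
          tridiagonal (fun _ => 2 * t) (fun _ => -t) (fun _ => -t) l :=
      fun l hl => tridiagonal_congr _ _ _
        (fun i hi => Function.update_of_ne (by omega) _ _) (fun _ _ => rfl) (fun _ _ => rfl)
    rw [det_tridiagonal_succ_succ, hcongr _ le_rfl, hcongr _ (by omega), det_tridiagonal_cartanA,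
      det_tridiagonal_cartanA, Function.update_self]
    push_cast
    ring

end Matrix

/-- The determinant of the dressed Cartan matrix of `sl(n|1)` in the maximally
asymmetric simple root system (entries indexed `1,…,n`: diagonal `2(k+n)` except
the last entry `1`, sub/super-diagonal `-(k+n)`, zeros elsewhere) equals
`-(k+n)^{n-1} · n · ℓ_n(k)` with `ℓ_n(k) = ((n-1)/n)k + n - 2`. -/
theorem det_dressed_cartan_asym (n : ℕ) (hn : 2 ≤ n) (k : ℂ)
    (G : Matrix (Fin n) (Fin n) ℂ)
    (hG : ∀ i j : Fin n, G i j =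
      if i = j then (if (i : ℕ) = n - 1 then 1 else 2 * (k + n))
      else if (i : ℕ) + 1 = (j : ℕ) ∨ (j : ℕ) + 1 = (i : ℕ) then -(k + n)
      else 0) :
    G.det = -(k + n) ^ (n - 1) * n * (((n : ℂ) - 1) / n * k + n - 2) := by
  obtain ⟨m, rfl⟩ : ∃ m, n = m + 1 := ⟨n - 1, by omega⟩
  have hG_tridiagonal : G = Matrix.tridiagonal
      (Function.update (fun _ => 2 * (k + (m + 1 : ℕ))) m 1)
      (fun _ => -(k + (m + 1 : ℕ))) (fun _ => -(k + (m + 1 : ℕ))) (m + 1) := by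
    ext i j
    rw [hG]
    simp only [Matrix.tridiagonal, Matrix.of_apply, Fin.ext_iff, Function.update_apply,
      Nat.add_sub_cancel]
    split_ifs <;> first | rfl | omega
  have hm : ((m : ℂ) + 1) ≠ 0 := by exact_mod_cast m.succ_ne_zero
  rw [hG_tridiagonal, Matrix.det_tridiagonal_update_last, Nat.add_sub_cancel]
  push_cast
  field_simp
  ring
end

section
/- Let n ≥ 2 be a natural number, k ∈ ℂ with ℓ_n(k) = ((n − 1)/n)·k + n − 2 ≠ 0, and let G be the n×n complex matrix with entries (indices 1,…,n): G_{i,i} = 2(k + n) for 1 ≤ i ≤ n − 1, G_{n,n} = 1, G_{i,i+1} = G_{i+1,i} = −(k + n) for 1 ≤ i ≤ n − 1, and all other entries 0. Define c ∈ ℂ^n by c_p = −p/(n·ℓ_n(k)) for p = 1, …, n. Then G·c equals the n-th standard basis vector e_n (i.e. (G·c)_i = 0 for i < n and (G·c)_n = 1), and c ⬝ (G·c) = −1/ℓ_n(k). -/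
/-!
Up to the scalar `-1/(nℓ)`, `c` is the weight vector `w_p = p` (indices from 1). Its second
differences vanish, also in the first row, where the missing neighbour would carry weight `0`.
So `G·w` is supported on the last row, where it equals `n - (k + n)(n - 1) = -nℓ`. Hence
`G·c = e_n` and `c ⬝ (G·c) = c_n = -1/ℓ`.
-/

open Finset Matrix

section Tridiagonal

variable {R : Type*} [CommRing R]

def symmTridiag (n : ℕ) (d : ℕ → R) (b : R) : Matrix (Fin n) (Fin n) R :=
  Matrix.of fun i j => if i = j then d i else if (i : ℕ) + 1 = j ∨ (j : ℕ) + 1 = i then b else 0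

lemma symmTridiag_mulVec_succ (n : ℕ) (d : ℕ → R) (b : R) (i : Fin n) :
    (symmTridiag n d b *ᵥ fun j => (j : R) + 1) i =
      d i * (i + 1) + b * (i + if (i : ℕ) + 1 < n then (i : R) + 2 else 0) := by
  obtain ⟨i, hi⟩ := i
  have hentry : ∀ j : ℕ,
      (if i = j then d i else if i + 1 = j ∨ j + 1 = i then b else 0) * ((j : R) + 1) =
      (if i = j then d i * (i + 1) else 0) + (if j + 1 = i then b * i else 0) +
        (if i + 1 = j then b * (i + 2) else 0) := by
    intro j
    split_ifs <;> first | (exfalso; omega) | (subst_vars; push_cast; ring)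
  have hlower : ∑ j ∈ range n, (if j + 1 = i then b * (i : R) else 0) = b * i := by
    rcases i with _ | m
    · simp
    · simp [show m < n by omega]
  simp only [mulVec, dotProduct, symmTridiag, of_apply, Fin.ext_iff]
  rw [Fin.sum_univ_eq_sum_range (fun j : ℕ => (if i = j then d i else
      if i + 1 = j ∨ j + 1 = i then b else 0) * ((j : R) + 1)) n]
  simp only [hentry, sum_add_distrib, sum_ite_eq, mem_range, hlower, hi, if_true]
  split_ifs <;> ring

def dressedCartanAsym (n : ℕ) (k : R) : Matrix (Fin n) (Fin n) R :=
  symmTridiag n (fun i => if i = n - 1 then 1 else 2 * (k + n)) (-(k + n))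

lemma dressedCartanAsym_mulVec_succ (n : ℕ) (k : R) :
    (dressedCartanAsym n k *ᵥ fun j => (j : R) + 1) =
      fun i : Fin n => if (i : ℕ) = n - 1 then -((n - 1) * k + n ^ 2 - 2 * n) else 0 := by
  funext ⟨i, hi⟩
  rw [dressedCartanAsym, symmTridiag_mulVec_succ]
  by_cases hlast : i = n - 1
  · have hcast : (i : R) = n - 1 := by
      rw [hlast, Nat.cast_sub (by omega), Nat.cast_one]
    simp only [hlast, if_true, show ¬ n - 1 + 1 < n by omega, if_false]
    rw [← hlast, hcast]
    ring
  · simp only [hlast, if_false, show i + 1 < n by omega, if_true]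
    ring

end Tridiagonal

/-- The coefficient vector `c` of `ξ = -(1/(nℓ_n(k)))(a_{n-1} + 2a_{n-2} + … + nψ)`
in the basis `a_{n-1}, …, a_1, ψ` satisfies `G·c = e_n` (i.e. `ξ·a_i = 0` and
`ξ·ψ = 1`) and `c ⬝ (G·c) = -1/ℓ_n(k)` (i.e. `ξ·ξ = -1/ℓ_n(k)`), where `G` is
the dressed Cartan matrix of `sl(n|1)` in the maximally asymmetric root system. -/
theorem xi_coords_asym (n : ℕ) (hn : 2 ≤ n) (k : ℂ)
    (l : ℂ) (hl : l = ((n : ℂ) - 1) / n * k + n - 2) (hl0 : l ≠ 0)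
    (G : Matrix (Fin n) (Fin n) ℂ)
    (hG : ∀ i j : Fin n, G i j =
      if i = j then (if (i : ℕ) = n - 1 then 1 else 2 * (k + n))
      else if (i : ℕ) + 1 = (j : ℕ) ∨ (j : ℕ) + 1 = (i : ℕ) then -(k + n)
      else 0)
    (c : Fin n → ℂ)
    (hc : ∀ p : Fin n, c p = -(((p : ℕ) + 1 : ℂ)) / (n * l)) :
    G.mulVec c = (fun i : Fin n => if (i : ℕ) = n - 1 then 1 else 0) ∧
    dotProduct c (G.mulVec c) = -1 / l := by
  have hn0 : (n : ℂ) ≠ 0 := Nat.cast_ne_zero.mpr (by omega)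
  have hnl : (n : ℂ) * l = (n - 1) * k + n ^ 2 - 2 * n := by
    rw [hl]; field_simp
  have hG_eq : G = dressedCartanAsym n k := by
    ext i j; rw [hG]; rfl
  have hc_smul : c = (-(n * l)⁻¹) • fun j : Fin n => (j : ℂ) + 1 := by
    funext p; rw [hc]; simp only [Pi.smul_apply, smul_eq_mul]; ring
  have hGc : G *ᵥ c = fun i : Fin n => if (i : ℕ) = n - 1 then 1 else 0 := by
    funext i
    rw [hc_smul, mulVec_smul, hG_eq, dressedCartanAsym_mulVec_succ, ← hnl, Pi.smul_apply]
    split_ifs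
    · rw [smul_eq_mul, neg_mul_neg, inv_mul_cancel₀ (mul_ne_zero hn0 hl0)]
    · rw [smul_zero]
  have hlast_eq_single : (fun i : Fin n => if (i : ℕ) = n - 1 then (1 : ℂ) else 0) =
      Pi.single ⟨n - 1, by omega⟩ 1 := by
    funext i; simp [Pi.single_apply, Fin.ext_iff]
  refine ⟨hGc, ?_⟩
  rw [hGc, hlast_eq_single, dotProduct_single, mul_one, hc, Nat.cast_sub (by omega)]
  field_simp
  ring
end

section
/- Let n ≥ 2 be a natural number and k ∈ ℂ with k ≠ −n. Let Γ be the (n+1)×(n+1) complex matrix with entries (indices 1,…,n+1): Γ_{i,i} = 2(k + n) for 1 ≤ i ≤ n − 1, Γ_{n,n} = 1, Γ_{n+1,n+1} = 0, Γ_{i,i+1} = Γ_{i+1,i} = −(k + n) for 1 ≤ i ≤ n − 1, Γ_{n,n+1} = Γ_{n+1,n} = 1, and all other entries 0. Let M be the (n+1)×(n+1) matrix with entries M_{p,q} = (1/n)·(n − max(p,q))·min(p,q)/(k + n) for 1 ≤ p, q ≤ n − 1; M_{p,n} = M_{n,p} = 0 for 1 ≤ p ≤ n − 1; M_{p,n+1}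 = M_{n+1,p} = p/n for 1 ≤ p ≤ n − 1; M_{n,n} = 0; M_{n,n+1} = M_{n+1,n} = 1; and M_{n+1,n+1} = ℓ_n(k), where ℓ_n(k) = ((n − 1)/n)·k + n − 2. Then Γ·M is the identity matrix (so M = Γ⁻¹). -/
/-!
Index rows and columns from `1`, so that `a_{n-1}, …, a_1` sit at `1, …, n - 1`, `ψ` at `n` and
`ξ` at `n + 1`. Every row of `Γ` is tridiagonal, and the bosonic rows are `k + n` times the Cartan
matrix of type `A_{n-1}`. Its adjugate `f p q = (n - max p q) * min p q` satisfies
`2 f p q - f (p - 1) q - f (p + 1) q = n δ_{pq}`, and it vanishes in row and column `n`, so it also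
accounts for the `ψ` row and column of `M`; the `ξ` column `p / n` is linear in `p`, hence killed by
the same second difference. The `ψ` row of `Γ` reduces to that identity at `p = n`, and the `ξ`
row just reads off row `n` of `M`.
-/

open Finset

section CartanA

variable (R : Type*) [CommRing R]

/-- The adjugate (`n` times the inverse) of the Cartan matrix of type `A_{n-1}`, 1-based. -/
def cartanAdjA (n p q : ℕ) : R := ((n : R) - (max p q : ℕ)) * (min p q : ℕ)

variable {R} {n p q : ℕ}

theorem cartanAdjA_laplacian (hp1 : 1 ≤ p) (hp : p ≤ n) (hq : q ≤ n) :
    2 * cartanAdjA R n p q - cartanAdjA R n (p - 1) q - cartanAdjA R n (p + 1) q =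
      if p = q then (n : R) else 0 := by
  obtain ⟨p, rfl⟩ : ∃ p', p = p' + 1 := ⟨p - 1, by omega⟩
  simp only [cartanAdjA, Nat.add_sub_cancel]
  rcases lt_trichotomy q (p + 1) with h | rfl | h
  · rw [max_eq_left (by omega), max_eq_left (by omega), max_eq_left (by omega),
      min_eq_right (by omega), min_eq_right (by omega), min_eq_right (by omega),
      if_neg (by omega)]
    push_cast; ring
  · simp only [max_self, min_self, if_true]
    rw [max_eq_right (by omega), min_eq_left (by omega), max_eq_left (by omega),
      min_eq_right (by omega)]
    push_cast; ring
  · rw [max_eq_right (by omega), max_eq_right (by omega), max_eq_right (by omega),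
      min_eq_left (by omega), min_eq_left (by omega), min_eq_left (by omega),
      if_neg (by omega)]
    push_cast; ring

theorem cartanAdjA_of_max_eq (h : max p q = n) : cartanAdjA R n p q = 0 := by
  simp [cartanAdjA, h]

theorem cartanAdjA_succ_self_left (hq : q ≤ n) : cartanAdjA R n (n + 1) q = -q := by
  rw [cartanAdjA, max_eq_left (by omega), min_eq_right (by omega)]
  push_cast; ring

end CartanA

def triRow {R : Type*} [AddZeroClass R] (a b c : R) (p r : ℕ) : R :=
  (if p - 1 = r then a else 0) + (if p = r then b else 0) + (if p + 1 = r then c else 0)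

theorem sum_range_triRow_mul {R : Type*} [Semiring R] {N p : ℕ} (hp : p + 1 < N) (a b c : R)
    (v : ℕ → R) :
    ∑ r ∈ range N, triRow a b c p r * v r = a * v (p - 1) + b * v p + c * v (p + 1) := by
  simp only [triRow, add_mul, ite_mul, zero_mul, sum_add_distrib, sum_ite_eq, mem_range]
  rw [if_pos (by omega), if_pos (by omega), if_pos (by omega)]

/-- `Γ_n(k)` with 1-based indices: rows `p < n` are bosonic, `p = n` is `ψ`, `p = n + 1` is `ξ`. -/
noncomputable def gramAsym (n : ℕ) (k : ℂ) (p r : ℕ) : ℂ :=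
  if p < n then triRow (-(k + n)) (2 * (k + n)) (-(k + n)) p r
  else if p = n then triRow (-(k + n)) 1 1 p r
  else if n = r then 1 else 0

/-- The `ψ` row and column of the paper's inverse appear here as row and column `n` of
`cartanAdjA` (which vanish) and of `p / n` (giving the entry `1` against `ξ`). -/
noncomputable def gramAsymInv (n : ℕ) (k : ℂ) (p q : ℕ) : ℂ :=
  if p ≤ n ∧ q ≤ n then cartanAdjA ℂ n p q / (n * (k + n))
  else if p ≤ n then (p : ℂ) / n
  else if q ≤ n then (q : ℂ) / n
  else ((n : ℂ) - 1) / n * k + n - 2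

section GramAsym

variable {n p q : ℕ} {k : ℂ}

theorem gramAsymInv_of_le (hp : p ≤ n) (hq : q ≤ n) :
    gramAsymInv n k p q = cartanAdjA ℂ n p q / (n * (k + n)) :=
  if_pos ⟨hp, hq⟩

theorem gramAsymInv_succ_right (hp : p ≤ n) : gramAsymInv n k p (n + 1) = p / n := by
  rw [gramAsymInv, if_neg (by omega), if_pos hp]

theorem gramAsymInv_succ_left (hq : q ≤ n) : gramAsymInv n k (n + 1) q = q / n := by
  rw [gramAsymInv, if_neg (by omega), if_neg (by omega), if_pos hq]

theorem gramAsymInv_succ_succ :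
    gramAsymInv n k (n + 1) (n + 1) = ((n : ℂ) - 1) / n * k + n - 2 := by
  rw [gramAsymInv, if_neg (by omega), if_neg (by omega), if_neg (by omega)]

theorem gramAsymInv_zero_left : gramAsymInv n k 0 q = 0 := by
  by_cases hq : q ≤ n <;> simp [gramAsymInv, cartanAdjA, hq]

theorem sum_gramAsym_mul_gramAsymInv_of_lt (hn : n ≠ 0) (hk : k + n ≠ 0) (hp1 : 1 ≤ p)
    (hp : p < n) (hq : q ≤ n + 1) :
    ∑ r ∈ range (n + 2), gramAsym n k p r * gramAsymInv n k r q = if p = q then 1 else 0 := by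
  simp only [gramAsym, if_pos hp]
  rw [sum_range_triRow_mul (by omega)]
  rcases hq.lt_or_eq with hq | rfl
  · rw [gramAsymInv_of_le (by omega) (by omega), gramAsymInv_of_le hp.le (by omega),
      gramAsymInv_of_le (by omega) (by omega)]
    calc _ = (2 * cartanAdjA ℂ n p q - cartanAdjA ℂ n (p - 1) q - cartanAdjA ℂ n (p + 1) q) / n :=
          by field_simp; ring
      _ = _ := by
          rw [cartanAdjA_laplacian hp1 hp.le (by omega)]
          split_ifs <;> simp [hn]
  · rw [gramAsymInv_succ_right (by omega), gramAsymInv_succ_right hp.le,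
      gramAsymInv_succ_right (by omega), if_neg (by omega), Nat.cast_sub hp1]
    field_simp; push_cast; ring

theorem sum_gramAsym_mul_gramAsymInv_self (hn : n ≠ 0) (hk : k + n ≠ 0) (hq : q ≤ n + 1) :
    ∑ r ∈ range (n + 2), gramAsym n k n r * gramAsymInv n k r q = if n = q then 1 else 0 := by
  simp only [gramAsym, lt_irrefl, if_false, if_true]
  rw [sum_range_triRow_mul (by omega)]
  rcases hq.lt_or_eq with hq | rfl
  · have hq' : q ≤ n := by omega
    have hψ : cartanAdjA ℂ n n q = 0 := cartanAdjA_of_max_eq (max_eq_left hq')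
    have hlap := cartanAdjA_laplacian (R := ℂ) (Nat.one_le_iff_ne_zero.2 hn) le_rfl hq'
    rw [hψ, cartanAdjA_succ_self_left hq'] at hlap
    rw [gramAsymInv_of_le (by omega) hq', gramAsymInv_of_le le_rfl hq', hψ,
      gramAsymInv_succ_left hq']
    calc _ = (q - cartanAdjA ℂ n (n - 1) q) / n := by field_simp; ring
      _ = _ := by
          rw [show (q : ℂ) - cartanAdjA ℂ n (n - 1) q = if n = q then (n : ℂ) else 0 by
            linear_combination hlap]
          split_ifs <;> simp [hn]
  · rw [gramAsymInv_succ_right (by omega), gramAsymInv_succ_right le_rfl,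
      gramAsymInv_succ_succ, if_neg (by omega), Nat.cast_sub (Nat.one_le_iff_ne_zero.2 hn)]
    field_simp; ring

theorem sum_gramAsym_mul_gramAsymInv_succ (hn : n ≠ 0) (hq : q ≤ n + 1) :
    ∑ r ∈ range (n + 2), gramAsym n k (n + 1) r * gramAsymInv n k r q =
      if n + 1 = q then 1 else 0 := by
  simp only [gramAsym, if_neg (show ¬ n + 1 < n by omega), if_neg (show n + 1 ≠ n by omega),
    ite_mul, one_mul, zero_mul, sum_ite_eq, mem_range, if_pos (show n < n + 2 by omega)]
  rcases hq.lt_or_eq with hq | rfl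
  · rw [gramAsymInv_of_le le_rfl (by omega), cartanAdjA_of_max_eq (by omega), if_neg (by omega),
      zero_div]
  · rw [gramAsymInv_succ_right le_rfl, if_pos rfl, div_self (by exact_mod_cast hn)]

theorem sum_gramAsym_mul_gramAsymInv (hn : n ≠ 0) (hk : k + n ≠ 0) (hp1 : 1 ≤ p)
    (hpn : p ≤ n + 1) (hq : q ≤ n + 1) :
    ∑ r ∈ range (n + 2), gramAsym n k p r * gramAsymInv n k r q = if p = q then 1 else 0 := by
  rcases (by omega : p < n ∨ p = n ∨ p = n + 1) with hp | rfl | rfl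
  · exact sum_gramAsym_mul_gramAsymInv_of_lt hn hk hp1 hp hq
  · exact sum_gramAsym_mul_gramAsymInv_self hn hk hq
  · exact sum_gramAsym_mul_gramAsymInv_succ hn hq

theorem of_gramAsym_mul_of_gramAsymInv (hn : n ≠ 0) (hk : k + n ≠ 0) :
    (Matrix.of fun i j : Fin (n + 1) => gramAsym n k (i + 1) (j + 1)) *
      (Matrix.of fun i j : Fin (n + 1) => gramAsymInv n k (i + 1) (j + 1)) = 1 := by
  ext i j
  have hshift :
      ∑ l : Fin (n + 1), gramAsym n k (i + 1) (l + 1) * gramAsymInv n k (l + 1) (j + 1) =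
        ∑ r ∈ range (n + 2), gramAsym n k (i + 1) r * gramAsymInv n k r (j + 1) := by
    rw [Fin.sum_univ_eq_sum_range (fun l => gramAsym n k (i + 1) (l + 1) *
      gramAsymInv n k (l + 1) (j + 1)), sum_range_succ' _ (n + 1), gramAsymInv_zero_left,
      mul_zero, add_zero]
  rw [Matrix.mul_apply, Matrix.one_apply]
  simp only [Matrix.of_apply]
  rw [hshift, sum_gramAsym_mul_gramAsymInv hn hk (by omega) (by omega) (by omega)]
  simp [Fin.ext_iff]

end GramAsym

/-- The explicit inverse of the Gram matrix `Γ_n(k)` of the vectors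
`a_{n-1}, …, a_1, ψ, ξ` (maximally asymmetric realization of `W^{(2)}_n(k)`):
with `1`-based indices `p, q`, the inverse has entries
`(n - max(p,q))·min(p,q)/(n(k+n))` for `p, q ≤ n-1`, vanishing `ψ` row/column
except the entry `1` pairing with `ξ`, entries `p/n` between `ξ` and the
bosonic rows, and `ℓ_n(k)` in the `(ξ,ξ)` corner. -/
theorem Gamma_asym_inverse (n : ℕ) (hn : 2 ≤ n) (k : ℂ) (hk : k ≠ -(n : ℂ))
    (Γ M : Matrix (Fin (n + 1)) (Fin (n + 1)) ℂ)
    (hΓ : ∀ i j : Fin (n + 1), Γ i j =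
      if i = j then
        (if (i : ℕ) < n - 1 then 2 * (k + n)
         else if (i : ℕ) = n - 1 then 1 else 0)
      else if ((i : ℕ) + 1 = (j : ℕ) ∧ (i : ℕ) < n - 1) ∨
              ((j : ℕ) + 1 = (i : ℕ) ∧ (j : ℕ) < n - 1) then -(k + n)
      else if ((i : ℕ) = n - 1 ∧ (j : ℕ) = n) ∨
              ((j : ℕ) = n - 1 ∧ (i : ℕ) = n) then 1
      else 0)
    (hM : ∀ i j : Fin (n + 1), M i j =
      (let p := (i : ℕ) + 1
       let q := (j : ℕ) + 1
       if p ≤ n - 1 ∧ q ≤ n - 1 then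
         ((n : ℂ) - (max p q : ℕ)) * ((min p q : ℕ) : ℂ) / ((n : ℂ) * (k + n))
       else if p = n + 1 ∧ q = n + 1 then ((n : ℂ) - 1) / n * k + n - 2
       else if p = n + 1 ∧ q ≤ n - 1 then (q : ℂ) / n
       else if q = n + 1 ∧ p ≤ n - 1 then (p : ℂ) / n
       else if (p = n ∧ q = n + 1) ∨ (p = n + 1 ∧ q = n) then 1
       else 0)) :
    Γ * M = 1 := by
  have hΓ' : Γ = Matrix.of fun i j : Fin (n + 1) => gramAsym n k (i + 1) (j + 1) := by
    ext i j
    rw [hΓ]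
    simp only [Matrix.of_apply, gramAsym, triRow, Fin.ext_iff]
    split_ifs <;> first | omega | simp
  have hM' : M = Matrix.of fun i j : Fin (n + 1) => gramAsymInv n k (i + 1) (j + 1) := by
    have hn' : (n : ℂ) ≠ 0 := by exact_mod_cast (show n ≠ 0 by omega)
    ext i j
    rw [hM]
    simp only [Matrix.of_apply, gramAsymInv]
    split_ifs <;>
      first
      | omega
      | rfl
      | rw [cartanAdjA_of_max_eq (by omega), zero_div]
      | rw [eq_comm, div_eq_one_iff_eq hn']; norm_cast; omega
  rw [hΓ', hM']
  exact of_gramAsym_mul_of_gramAsymInv (by omega) fun h => hk (eq_neg_of_add_eq_zero_left h)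
end

section
/- Let n ≥ 2 and 1 ≤ m ≤ n − 1 be natural numbers, k ∈ ℂ, K = k + n, and let Γ be the (n+1)×(n+1) complex symmetric matrix with entries (indices 1,…,n+1, positions n − m and n − m + 1 being the two 'odd' positions and n + 1 the 'ξ' position): Γ_{p,p} = 2K for p ∈ {1,…,n} ∖ {n−m, n−m+1}; Γ_{n−m,n−m} = Γ_{n−m+1,n−m+1} = 1; Γ_{n+1,n+1} = 0; Γ_{p,p+1} = Γ_{p+1,p} = −K for all 1 ≤ p ≤ n − 1 with p ≠ n − m; Γ_{n−m,n−m+1} = Γ_{n−m+1,n−m} = K − 1; Γ_{n−m,n+1} = Γ_{n+1,n−m} = 1; Γ_{n−m+1,n+1} = Γ_{n+1,n−m+1} = −1; and all other entries 0. Then det Γ = −n·(k + n)^{n−1}. -/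
/-!
Replacing `ψ_-` by `ψ_+ + ψ_-` is a unimodular change of basis, so it does not change the
determinant. In the new basis `ψ_+ + ψ_-` is an even root of norm `2K` (`K = k + n`) joined by
`-K` to `a_1` and `a_{-1}`, and `ξ` is orthogonal to every vector except `ψ_+`, with
`(ψ_+, ξ) = 1`. Expanding along the row and the column of `ξ` leaves, with sign `-1`, the Gram
matrix of the chain `a_{n-m-1}, …, a_1, ψ_+ + ψ_-, a_{-1}, …, a_{-m+1}`, which is `K` times the
Cartan matrix of type `A_{n-1}`, of determinant `n`.
-/

open Matrix

namespace Matrix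

variable {R : Type*} [CommRing R]

theorem det_succ_succ_of_row_zero_col_zero {N : ℕ} (M : Matrix (Fin (N + 2)) (Fin (N + 2)) R)
    (hrow : ∀ j : Fin N, M 0 j.succ.succ = 0) (hcol : ∀ i : Fin N, M i.succ.succ 0 = 0) :
    M.det = M 0 0 * (M.submatrix Fin.succ Fin.succ).det
      - M 0 1 * M 1 0 * (M.submatrix (Fin.succ ∘ Fin.succ) (Fin.succ ∘ Fin.succ)).det := by
  have hsucc : Fin.succAbove 1 ∘ Fin.succ = (Fin.succ ∘ Fin.succ : Fin N → Fin (N + 2)) :=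
    funext fun j => by
      rw [Function.comp_apply, ← Fin.succ_zero_eq_one, Fin.succ_succAbove_succ, Fin.succAbove_zero]
      rfl
  have hminor : (M.submatrix Fin.succ (Fin.succAbove 1)).det
      = M 1 0 * (M.submatrix (Fin.succ ∘ Fin.succ) (Fin.succ ∘ Fin.succ)).det := by
    rw [det_succ_column_zero, Fin.sum_univ_succ]
    simp [hcol, submatrix_submatrix, hsucc]
  rw [det_succ_row_zero, Fin.sum_univ_succ, Fin.sum_univ_succ]
  simp only [Fin.succ_zero_eq_one, Fin.succAbove_zero, Fin.val_zero, Fin.val_one, Fin.val_succ,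
    hrow, hminor, mul_zero, zero_mul, Finset.sum_const_zero, add_zero]
  ring

theorem det_eq_neg_mul_det_of_last_eq_single {N : ℕ} (M : Matrix (Fin (N + 2)) (Fin (N + 2)) R)
    (s : Fin (N + 1)) (a b : R) (hrow : M (Fin.last _) = Pi.single s.castSucc a)
    (hcol : Mᵀ (Fin.last _) = Pi.single s.castSucc b) :
    M.det = -(a * b) *
      (M.submatrix (Fin.castSucc ∘ s.succAbove) (Fin.castSucc ∘ s.succAbove)).det := by
  have hcol' (i : Fin (N + 2)) :
      M i (Fin.last _) = (Pi.single s.castSucc b : Fin (N + 2) → R) i :=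
    congrFun hcol i
  have hcomm : s.castSucc.succAbove ∘ Fin.castSucc = Fin.castSucc ∘ s.succAbove :=
    funext fun _ => Fin.castSucc_succAbove_castSucc
  have hsign : (-1 : R) ^ (N + 1 + (s : ℕ)) * (-1) ^ ((s : ℕ) + N) = -1 := by
    rw [← pow_add, Odd.neg_one_pow ⟨N + s, by ring⟩]
  rw [det_succ_row M (Fin.last _),
    Finset.sum_eq_single s.castSucc (fun j _ hj => by simp [hrow, hj]) (by simp),
    det_succ_column _ (Fin.last _),
    Finset.sum_eq_single s (fun i _ hi => by simp [hcol', hi]) (by simp)]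
  simp only [Fin.val_last, Fin.val_castSucc, hrow, Pi.single_eq_same, Fin.succAbove_last,
    submatrix_apply, ne_eq, Fin.castSucc_ne_last, not_false_eq_true, Fin.succAbove_ne_last_last,
    hcol', submatrix_submatrix, hcomm]
  linear_combination
    (a * b * (M.submatrix (Fin.castSucc ∘ s.succAbove) (Fin.castSucc ∘ s.succAbove)).det) * hsign

theorem transvection_mul_mul_transvection_apply {n : Type*} [Fintype n] [DecidableEq n]
    (M : Matrix n n R) (i j : n) (c : R) (a b : n) :
    (transvection i j c * M * transvection j i c) a b = M a b + (if a = i then c * M j b else 0)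
      + (if b = i then c * M a j else 0) + (if a = i ∧ b = i then c * c * M j j else 0) := by
  by_cases hb : b = i
  · subst hb
    rw [mul_transvection_apply_same]
    by_cases ha : a = b
    · subst ha
      simp only [transvection_mul_apply_same, ↓reduceIte, and_self]
      ring
    · simp [ha, transvection_mul_apply_of_ne]
  · rw [mul_transvection_apply_of_ne _ _ a b hb]
    by_cases ha : a = i
    · subst ha
      simp [hb]
    · simp [ha, hb, transvection_mul_apply_of_ne]

end Matrix

theorem Fin.val_succAbove_cases {n : ℕ} (p : Fin (n + 1)) (i : Fin n) :
    ((p.succAbove i : ℕ) = i ∧ (i : ℕ) < p) ∨ ((p.succAbove i : ℕ) = i + 1 ∧ (p : ℕ) ≤ i) := by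
  rcases lt_or_ge i.castSucc p with h | h
  · exact Or.inl ⟨by rw [Fin.succAbove_of_castSucc_lt _ _ h]; rfl, h⟩
  · exact Or.inr ⟨by rw [Fin.succAbove_of_le_castSucc _ _ h]; rfl, h⟩

namespace CartanMatrix

theorem A_submatrix_succ (n : ℕ) : (A (n + 1)).submatrix Fin.succ Fin.succ = A n := by
  ext i j
  simp [A]

theorem det_A : ∀ n : ℕ, (A n).det = n + 1
  | 0 => by simp
  | 1 => by simp [A_one]
  | n + 2 => by
    rw [det_succ_succ_of_row_zero_col_zero _ (fun j => by simp [A, (Fin.succ_ne_zero _).symm])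
        (fun i => by simp [A]),
      ← submatrix_submatrix, A_submatrix_succ, A_submatrix_succ, det_A (n + 1), det_A n]
    simp only [A, of_apply, Fin.val_zero, Fin.val_one, ↓reduceIte]
    norm_num
    ring

end CartanMatrix

/-- `Γ_{p,q}` with `1`-based indices `p, q` and `K` standing for `k + n`. -/
def gramEntry (n m : ℕ) (K : ℂ) (p q : ℕ) : ℂ :=
  if p = q then
    (if p = n - m ∨ p = n - m + 1 then 1 else if p = n + 1 then 0 else 2 * K)
  else if (p + 1 = q ∧ p ≤ n - 1 ∧ p ≠ n - m) ∨ (q + 1 = p ∧ q ≤ n - 1 ∧ q ≠ n - m) then -K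
  else if (p = n - m ∧ q = n - m + 1) ∨ (q = n - m ∧ p = n - m + 1) then K - 1
  else if (p = n - m ∧ q = n + 1) ∨ (q = n - m ∧ p = n + 1) then 1
  else if (p = n - m + 1 ∧ q = n + 1) ∨ (q = n - m + 1 ∧ p = n + 1) then -1
  else 0

namespace gramEntry

variable {n m : ℕ} {K : ℂ}

theorem comm (p q : ℕ) : gramEntry n m K p q = gramEntry n m K q p := by
  unfold gramEntry
  by_cases h : p = q
  · subst h
    rfl
  · rw [if_neg h, if_neg (Ne.symm h)]
    exact if_congr or_comm rfl (if_congr or_comm rfl (if_congr or_comm rfl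
      (if_congr or_comm rfl rfl)))

theorem xi_row (hm : 1 ≤ m) (hmn : m < n) (q : ℕ) :
    gramEntry n m K (n + 1) q = if q = n - m then 1 else if q = n - m + 1 then -1 else 0 := by
  unfold gramEntry
  split_ifs <;> first | rfl | omega

theorem psiPlus_row (q : ℕ) :
    gramEntry n m K (n - m) q = if q = n - m then 1 else if q = n - m + 1 then K - 1
      else if q + 1 = n - m then -K else if q = n + 1 then 1 else 0 := by
  unfold gramEntry
  split_ifs <;> first | rfl | omega

theorem psiMinus_row (hm : 1 ≤ m) (hmn : m < n) (q : ℕ) :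
    gramEntry n m K (n - m + 1) q = if q = n - m then K - 1 else if q = n - m + 1 then 1
      else if q = n + 1 then -1 else if q = n - m + 2 then -K else 0 := by
  unfold gramEntry
  split_ifs <;> first | rfl | omega

theorem even_row (p q : ℕ) (hp : p ≠ n - m) (hp' : p ≠ n - m + 1) (hpn : p ≤ n) :
    gramEntry n m K p q =
      if q = p then 2 * K else if (q + 1 = p ∨ p + 1 = q) ∧ q ≤ n then -K else 0 := by
  unfold gramEntry
  split_ifs <;> first | rfl | omega

theorem add_psiPlus_to_psiMinus {N : ℕ} (hm : 1 ≤ m) (hmN : m ≤ N) (x y : ℕ)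
    (hx : x ≠ N - m) (hy : y ≠ N - m) (hxN : x ≤ N) (hyN : y ≤ N) :
    gramEntry (N + 1) m K (x + 1) (y + 1)
      + (if x = N - m + 1 then gramEntry (N + 1) m K (N - m + 1) (y + 1) else 0)
      + (if y = N - m + 1 then gramEntry (N + 1) m K (x + 1) (N - m + 1) else 0)
      + (if x = N - m + 1 ∧ y = N - m + 1 then gramEntry (N + 1) m K (N - m + 1) (N - m + 1)
          else 0)
    = if x = y then 2 * K else if x + 1 = y ∨ y + 1 = x ∨ (x + 1 = N - m ∧ y = N - m + 1)
        ∨ (y + 1 = N - m ∧ x = N - m + 1) then -K else 0 := by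
  have hmn : m < N + 1 := by omega
  rw [show N - m + 1 = N + 1 - m by omega]
  simp only [comm (x + 1) (N + 1 - m), psiPlus_row]
  by_cases hψ : x = N + 1 - m
  · subst hψ
    simp only [psiMinus_row hm hmn, true_and, and_true, ↓reduceIte]
    split_ifs <;> first | omega | ring
  · simp only [even_row (n := N + 1) (m := m) (K := K) (x + 1) _ (by omega) (by omega) (by omega)]
    split_ifs <;> first | omega | ring

end gramEntry

def gramMatrix (n m : ℕ) (K : ℂ) : Matrix (Fin (n + 1)) (Fin (n + 1)) ℂ :=
  of fun i j => gramEntry n m K (i + 1) (j + 1)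

/-- The `0`-based index of `ψ_+` when `n = N + 1`. -/
def psiPlus (N m : ℕ) : Fin (N + 1) := ⟨N - m, Nat.sub_lt_succ N m⟩

/-- The Gram matrix in the basis where `ψ_-` is replaced by `ψ_+ + ψ_-`. -/
def evenGramMatrix (N m : ℕ) (K : ℂ) : Matrix (Fin (N + 2)) (Fin (N + 2)) ℂ :=
  transvection (psiPlus N m).succ (psiPlus N m).castSucc 1 * gramMatrix (N + 1) m K
    * transvection (psiPlus N m).castSucc (psiPlus N m).succ 1

section evenGramMatrix

variable {N m : ℕ} (K : ℂ)

theorem det_evenGramMatrix : (evenGramMatrix N m K).det = (gramMatrix (N + 1) m K).det := by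
  have h : (psiPlus N m).succ ≠ (psiPlus N m).castSucc := Fin.castSucc_lt_succ.ne'
  simp [evenGramMatrix, det_transvection_of_ne _ _ h, det_transvection_of_ne _ _ h.symm]

theorem evenGramMatrix_last_row (hm : 1 ≤ m) (hmN : m ≤ N) :
    evenGramMatrix N m K (Fin.last _) = Pi.single (psiPlus N m).castSucc 1 := by
  ext j
  rw [evenGramMatrix, transvection_mul_mul_transvection_apply]
  simp only [gramMatrix, of_apply, Fin.val_last, gramEntry.xi_row hm (by omega : m < N + 1),
    Pi.single_apply, Fin.ext_iff, Fin.val_succ, Fin.val_castSucc, psiPlus]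
  split_ifs <;> first | omega | norm_num

theorem evenGramMatrix_transpose_last_row (hm : 1 ≤ m) (hmN : m ≤ N) :
    (evenGramMatrix N m K)ᵀ (Fin.last _) = Pi.single (psiPlus N m).castSucc 1 := by
  ext i
  rw [transpose_apply, evenGramMatrix, transvection_mul_mul_transvection_apply]
  simp only [gramMatrix, of_apply, Fin.val_last, gramEntry.comm _ (N + 1 + 1),
    gramEntry.xi_row hm (by omega : m < N + 1), Pi.single_apply, Fin.ext_iff, Fin.val_succ,
    Fin.val_castSucc, psiPlus]
  split_ifs <;> first | omega | norm_num

theorem evenGramMatrix_submatrix (hm : 1 ≤ m) (hmN : m ≤ N) :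
    (evenGramMatrix N m K).submatrix (Fin.castSucc ∘ (psiPlus N m).succAbove)
      (Fin.castSucc ∘ (psiPlus N m).succAbove)
      = K • (Int.castRingHom ℂ).mapMatrix (CartanMatrix.A N) := by
  ext i j
  have hi := Fin.val_succAbove_cases (psiPlus N m) i
  have hj := Fin.val_succAbove_cases (psiPlus N m) j
  have hiN := ((psiPlus N m).succAbove i).isLt
  have hjN := ((psiPlus N m).succAbove j).isLt
  simp only [psiPlus] at hi hj hiN hjN
  simp only [submatrix_apply, Function.comp_apply, evenGramMatrix,
    transvection_mul_mul_transvection_apply, gramMatrix, of_apply, Fin.ext_iff, Fin.val_castSucc,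
    Fin.val_succ, psiPlus, one_mul, Matrix.smul_apply, RingHom.mapMatrix_apply, map_apply,
    CartanMatrix.A, eq_intCast, smul_eq_mul]
  rw [gramEntry.add_psiPlus_to_psiMinus hm hmN _ _ (by omega) (by omega) (by omega) (by omega)]
  split_ifs <;> first | omega | (push_cast; ring)

end evenGramMatrix

theorem det_gramMatrix {n m : ℕ} (hm : 1 ≤ m) (hmn : m < n) (K : ℂ) :
    (gramMatrix n m K).det = -n * K ^ (n - 1) := by
  obtain ⟨N, rfl⟩ : ∃ N, n = N + 1 := ⟨n - 1, by omega⟩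
  rw [← det_evenGramMatrix, det_eq_neg_mul_det_of_last_eq_single _ _ 1 1
    (evenGramMatrix_last_row K hm (by omega)) (evenGramMatrix_transpose_last_row K hm (by omega)),
    evenGramMatrix_submatrix K hm (by omega), det_smul, ← RingHom.map_det, CartanMatrix.det_A]
  simp only [eq_intCast, Fintype.card_fin, Nat.add_sub_cancel]
  push_cast
  ring

theorem det_Gamma_nm_general (n m : ℕ) (hm1 : 1 ≤ m) (hm2 : m ≤ n - 1)
    (k : ℂ)
    (Γ : Matrix (Fin (n + 1)) (Fin (n + 1)) ℂ)
    (hΓ : ∀ i j : Fin (n + 1), Γ i j =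
      (let p := (i : ℕ) + 1
       let q := (j : ℕ) + 1
       if p = q then
         (if p = n - m ∨ p = n - m + 1 then 1
          else if p = n + 1 then 0 else 2 * (k + n))
       else if (p + 1 = q ∧ p ≤ n - 1 ∧ p ≠ n - m) ∨
               (q + 1 = p ∧ q ≤ n - 1 ∧ q ≠ n - m) then -(k + n)
       else if (p = n - m ∧ q = n - m + 1) ∨
               (q = n - m ∧ p = n - m + 1) then k + n - 1
       else if (p = n - m ∧ q = n + 1) ∨ (q = n - m ∧ p = n + 1) then 1
       else if (p = n - m + 1 ∧ q = n + 1) ∨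
               (q = n - m + 1 ∧ p = n + 1) then -1
       else 0)) :
    Γ.det = -(n : ℂ) * (k + n) ^ (n - 1) := by
  have hgram : Γ = gramMatrix n m (k + n) := ext hΓ
  rw [hgram, det_gramMatrix hm1 (by omega)]

/-- The Gram matrix `Γ^{(n,m)}(k)` of the `n+1` vectors
`a_{n-m-1}, …, a_1, ψ_+, ψ_-, a_{-1}, …, a_{-m+1}, ξ` defining the `n[m]`
realization of `W^{(2)}_n(k)` has determinant `-n(k+n)^{n-1}`, for any
`1 ≤ m ≤ n-1`.  (`1`-based indices; odd positions `n-m`, `n-m+1`; `ξ` at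
position `n+1`.) -/
theorem det_Gamma_nm (n m : ℕ) (hn : 2 ≤ n) (hm1 : 1 ≤ m) (hm2 : m ≤ n - 1)
    (k : ℂ)
    (Γ : Matrix (Fin (n + 1)) (Fin (n + 1)) ℂ)
    (hΓ : ∀ i j : Fin (n + 1), Γ i j =
      (let p := (i : ℕ) + 1
       let q := (j : ℕ) + 1
       if p = q then
         (if p = n - m ∨ p = n - m + 1 then 1
          else if p = n + 1 then 0 else 2 * (k + n))
       else if (p + 1 = q ∧ p ≤ n - 1 ∧ p ≠ n - m) ∨
               (q + 1 = p ∧ q ≤ n - 1 ∧ q ≠ n - m) then -(k + n)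
       else if (p = n - m ∧ q = n - m + 1) ∨
               (q = n - m ∧ p = n - m + 1) then k + n - 1
       else if (p = n - m ∧ q = n + 1) ∨ (q = n - m ∧ p = n + 1) then 1
       else if (p = n - m + 1 ∧ q = n + 1) ∨
               (q = n - m + 1 ∧ p = n + 1) then -1
       else 0)) :
    Γ.det = -(n : ℂ) * (k + n) ^ (n - 1) :=
  det_Gamma_nm_general n m hm1 hm2 k Γ hΓ
end

section
/- Let n ≥ 2 and 1 ≤ m ≤ n − 1 be natural numbers, k ∈ ℂ, and let Γ be the (n+1)×(n+1) matrix of the n[m] realization: Γ_{p,p} = 2(k+n) for p ∈ {1,…,n} ∖ {n−m, n−m+1}, Γ_{n−m,n−m} = Γ_{n−m+1,n−m+1} = 1, Γ_{n+1,n+1} = 0, Γ_{p,p+1} = Γ_{p+1,p} = −(k+n) for 1 ≤ p ≤ n − 1 with p ≠ n − m, Γ_{n−m,n−m+1} = Γ_{n−m+1,n−m} = k + n − 1, Γ_{n−m,n+1} = Γ_{n+1,n−m} = 1, Γ_{n−m+1,n+1} = Γ_{n+1,n−m+1} = −1, all other entries 0. Define h ∈ ℂ^{n+1} by h_p = p/n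 for 1 ≤ p ≤ n − m, h_q = (q − n − 1)/n for n − m + 1 ≤ q ≤ n, and h_{n+1} = ℓ_n(k) = ((n − 1)/n)·k + n − 2. Then Γ·h equals the (n+1)-th standard basis vector e_{n+1}, and h ⬝ (Γ·h) = ℓ_n(k). -/
/-!
Write `u = e_{ψ₊} - e_{ψ₋}` and `ξ` for the last basis vector. Then
`Γ = (k + n) (A ⊕ 0) + (1 - 2(k + n)) u uᵀ + u ξᵀ + ξ uᵀ` with `A` the Cartan matrix of
`sl_{n+1}`. On the first `n` coordinates `h` is the linear function `p / n`, vanishing at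
`p = 0`, except for a drop by `(n + 1) / n` between `ψ₊` and `ψ₋`, so its second difference
is `A h = ((n + 1) / n) u`; moreover `u ⬝ h = 1` and `ξ ⬝ h = ℓ`. Hence
`Γ h = ((k + n)(n + 1) / n + 1 - 2(k + n) + ℓ) u + ξ`, and the coefficient of `u` vanishes
exactly for `ℓ = ℓ_n(k)`. Finally `h ⬝ Γ h = h ⬝ ξ = ℓ`.
-/

open Matrix

namespace HeisenbergCoords

def paddedCartanA (n : ℕ) : Matrix (Fin (n + 1)) (Fin (n + 1)) ℂ :=
  of fun i j =>
    if h : (i : ℕ) < n ∧ (j : ℕ) < n then (CartanMatrix.A n ⟨i, h.1⟩ ⟨j, h.2⟩ : ℂ)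
    else 0

theorem paddedCartanA_mulVec {g : ℕ → ℂ} (hg : g 0 = 0) (n : ℕ) (i : Fin (n + 1)) :
    (paddedCartanA n *ᵥ fun j => g (j + 1)) i =
      if (i : ℕ) < n then 2 * g (i + 1) - g i - (if (i : ℕ) + 1 < n then g (i + 2) else 0)
      else 0 := by
  let row : ℕ → ℂ := fun j => if (i : ℕ) < n then
    (2 * if j = i then g (j + 1) else 0)
      - (if j = i + 1 then (if j < n then g (j + 1) else 0) else 0)
      - (if j = i - 1 then (if 0 < (i : ℕ) then g (j + 1) else 0) else 0)
    else 0
  have hrow : ∀ j : Fin (n + 1), paddedCartanA n i j * g (j + 1) = row j := by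
    intro j
    simp only [row, paddedCartanA, CartanMatrix.A, of_apply, Fin.ext_iff]
    split_ifs <;> first | push_cast; ring1 | omega
  simp only [mulVec, dotProduct, hrow]
  rw [Fin.sum_univ_eq_sum_range row]
  by_cases hi : (i : ℕ) < n
  · simp only [row, hi, if_true, Finset.sum_sub_distrib, ← Finset.mul_sum, Finset.sum_ite_eq',
      Finset.mem_range, show (i : ℕ) < n + 1 by omega, show (i : ℕ) + 1 < n + 1 by omega,
      show (i : ℕ) - 1 < n + 1 by omega]
    rcases Nat.eq_zero_or_pos (i : ℕ) with hi0 | hi0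
    · simp only [hi0, hg, lt_self_iff_false, if_false]
      ring
    · simp only [hi0, if_true, Nat.sub_add_cancel hi0]
      ring
  · simp [row, hi]

def psiDiff (n m : ℕ) : Fin (n + 1) → ℂ :=
  Pi.single ⟨n - m - 1, by omega⟩ 1 - Pi.single ⟨n - m, by omega⟩ 1

/-- Indices are 1-based as in the paper, `p = i + 1`: `p = n - m` is `ψ₊`, `p = n - m + 1` is
`ψ₋` and `p = n + 1` is `ξ`. -/
def nmGram (n m : ℕ) (k : ℂ) : Matrix (Fin (n + 1)) (Fin (n + 1)) ℂ :=
  of fun i j =>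
      (let p := (i : ℕ) + 1
       let q := (j : ℕ) + 1
       if p = q then
         (if p = n - m ∨ p = n - m + 1 then 1
          else if p = n + 1 then 0 else 2 * (k + n))
       else if (p + 1 = q ∧ p ≤ n - 1 ∧ p ≠ n - m) ∨
               (q + 1 = p ∧ q ≤ n - 1 ∧ q ≠ n - m) then -(k + n)
       else if (p = n - m ∧ q = n - m + 1) ∨
               (q = n - m ∧ p = n - m + 1) then k + n - 1
       else if (p = n - m ∧ q = n + 1) ∨ (q = n - m ∧ p = n + 1) then 1
       else if (p = n - m + 1 ∧ q = n + 1) ∨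
               (q = n - m + 1 ∧ p = n + 1) then -1
       else 0)

theorem nmGram_eq {n m : ℕ} (hm1 : 1 ≤ m) (hm2 : m ≤ n - 1) (k : ℂ) :
    nmGram n m k = (k + n) • paddedCartanA n
      + (1 - 2 * (k + n)) • vecMulVec (psiDiff n m) (psiDiff n m)
      + vecMulVec (psiDiff n m) (Pi.single (Fin.last n) 1)
      + vecMulVec (Pi.single (Fin.last n) 1) (psiDiff n m) := by
  ext i j
  simp only [nmGram, paddedCartanA, CartanMatrix.A, psiDiff, vecMulVec, of_apply,
    Matrix.add_apply, Matrix.smul_apply, smul_eq_mul, Pi.sub_apply, Pi.single_apply, Fin.ext_iff,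
    Fin.val_last]
  push_cast
  grind (splits := 40)

noncomputable def nmHeisCoeff (n m : ℕ) (l : ℂ) (p : ℕ) : ℂ :=
  if p ≤ n - m then (p : ℂ) / n
  else if p ≤ n then ((p : ℂ) - n - 1) / n
  else l

theorem paddedCartanA_mulVec_nmHeisCoeff {n m : ℕ} (hm1 : 1 ≤ m) (hm2 : m ≤ n - 1) (l : ℂ) :
    (paddedCartanA n *ᵥ fun j => nmHeisCoeff n m l (j + 1)) =
      ((n + 1) / n : ℂ) • psiDiff n m := by
  have hn : (n : ℂ) ≠ 0 := by norm_cast; omega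
  ext i
  rw [paddedCartanA_mulVec (by simp [nmHeisCoeff])]
  simp only [nmHeisCoeff, psiDiff, Pi.smul_apply, Pi.sub_apply, Pi.single_apply, Fin.ext_iff,
    smul_eq_mul]
  push_cast
  split_ifs <;> first
    | (exfalso; omega)
    | (field_simp; ring1)
    -- the last row `i + 1 = n`, whose right neighbour is not part of the Cartan block
    | (rw [show (n : ℂ) = (i : ℕ) + 1 by exact_mod_cast (by omega : n = (i : ℕ) + 1)]
       field_simp; ring1)

theorem psiDiff_dotProduct_nmHeisCoeff {n m : ℕ} (hm1 : 1 ≤ m) (hm2 : m ≤ n - 1) (l : ℂ) :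
    psiDiff n m ⬝ᵥ (fun j => nmHeisCoeff n m l (j + 1)) = 1 := by
  have hn : (n : ℂ) ≠ 0 := by norm_cast; omega
  simp only [psiDiff, sub_dotProduct, single_dotProduct, nmHeisCoeff, one_mul]
  rw [if_pos (by omega), if_neg (by omega), if_pos (by omega)]
  push_cast [Nat.sub_add_cancel (by omega : 1 ≤ n - m), Nat.cast_sub (by omega : m ≤ n)]
  field_simp
  ring

theorem nmGram_mulVec_nmHeisCoeff {n m : ℕ} (hm1 : 1 ≤ m) (hm2 : m ≤ n - 1) (k : ℂ)
    {l : ℂ} (hl : l = ((n : ℂ) - 1) / n * k + n - 2) :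
    nmGram n m k *ᵥ (fun j => nmHeisCoeff n m l (j + 1)) = Pi.single (Fin.last n) 1 := by
  have hn : (n : ℂ) ≠ 0 := by norm_cast; omega
  have hξ :
      Pi.single (Fin.last n) 1 ⬝ᵥ (fun j : Fin (n + 1) => nmHeisCoeff n m l (j + 1)) = l := by
    simp [single_dotProduct, nmHeisCoeff]
  simp only [nmGram_eq hm1 hm2, add_mulVec, smul_mulVec, vecMulVec_mulVec, op_smul_eq_smul,
    paddedCartanA_mulVec_nmHeisCoeff hm1 hm2, psiDiff_dotProduct_nmHeisCoeff hm1 hm2, hξ, one_smul]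
  have hcoef : (k + n) * ((n + 1) / n) + (1 - 2 * (k + n)) + l = 0 := by
    rw [hl]; field_simp; ring
  linear_combination (norm := module) hcoef • psiDiff n m

end HeisenbergCoords

theorem heisenberg_coords_nm_general (n m : ℕ) (hm1 : 1 ≤ m) (hm2 : m ≤ n - 1)
    (k : ℂ) (l : ℂ) (hl : l = ((n : ℂ) - 1) / n * k + n - 2)
    (Γ : Matrix (Fin (n + 1)) (Fin (n + 1)) ℂ)
    (hΓ : ∀ i j : Fin (n + 1), Γ i j =
      (let p := (i : ℕ) + 1
       let q := (j : ℕ) + 1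
       if p = q then
         (if p = n - m ∨ p = n - m + 1 then 1
          else if p = n + 1 then 0 else 2 * (k + n))
       else if (p + 1 = q ∧ p ≤ n - 1 ∧ p ≠ n - m) ∨
               (q + 1 = p ∧ q ≤ n - 1 ∧ q ≠ n - m) then -(k + n)
       else if (p = n - m ∧ q = n - m + 1) ∨
               (q = n - m ∧ p = n - m + 1) then k + n - 1
       else if (p = n - m ∧ q = n + 1) ∨ (q = n - m ∧ p = n + 1) then 1
       else if (p = n - m + 1 ∧ q = n + 1) ∨
               (q = n - m + 1 ∧ p = n + 1) then -1
       else 0))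
    (h : Fin (n + 1) → ℂ)
    (hh : ∀ i : Fin (n + 1), h i =
      (let p := (i : ℕ) + 1
       if p ≤ n - m then (p : ℂ) / n
       else if p ≤ n then ((p : ℂ) - n - 1) / n
       else l)) :
    Γ.mulVec h = (fun i : Fin (n + 1) => if (i : ℕ) = n then 1 else 0) ∧
    dotProduct h (Γ.mulVec h) = l := by
  have hΓh : Γ *ᵥ h = Pi.single (Fin.last n) 1 := by
    obtain rfl : Γ = HeisenbergCoords.nmGram n m k := Matrix.ext hΓ
    obtain rfl : h = fun j : Fin (n + 1) => HeisenbergCoords.nmHeisCoeff n m l (j + 1) :=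
      funext hh
    exact HeisenbergCoords.nmGram_mulVec_nmHeisCoeff hm1 hm2 k hl
  have hξ : (fun i : Fin (n + 1) => if (i : ℕ) = n then (1 : ℂ) else 0) =
      Pi.single (Fin.last n) 1 := by
    ext i
    simp [Pi.single_apply, Fin.ext_iff]
  refine ⟨hΓh.trans hξ.symm, ?_⟩
  rw [hΓh, dotProduct_single, hh]
  simp

/-- The coefficient vector `h` of the Heisenberg current `ℋ` of
`W^{(2)}_{n[m]}(k)` in the ordered basis
`a_{n-m-1}, …, a_1, ψ_+, ψ_-, a_{-1}, …, a_{-m+1}, ξ` satisfies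
`Γ·h = e_{n+1}` (so `ℋ` pairs to zero with every screening momentum and to `1`
with `ξ`) and `h ⬝ (Γ·h) = ℓ_n(k)` (the Heisenberg OPE level), where `Γ` is the
Gram matrix of the `n[m]` realization. -/
theorem heisenberg_coords_nm (n m : ℕ) (hn : 2 ≤ n) (hm1 : 1 ≤ m) (hm2 : m ≤ n - 1)
    (k : ℂ) (l : ℂ) (hl : l = ((n : ℂ) - 1) / n * k + n - 2)
    (Γ : Matrix (Fin (n + 1)) (Fin (n + 1)) ℂ)
    (hΓ : ∀ i j : Fin (n + 1), Γ i j =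
      (let p := (i : ℕ) + 1
       let q := (j : ℕ) + 1
       if p = q then
         (if p = n - m ∨ p = n - m + 1 then 1
          else if p = n + 1 then 0 else 2 * (k + n))
       else if (p + 1 = q ∧ p ≤ n - 1 ∧ p ≠ n - m) ∨
               (q + 1 = p ∧ q ≤ n - 1 ∧ q ≠ n - m) then -(k + n)
       else if (p = n - m ∧ q = n - m + 1) ∨
               (q = n - m ∧ p = n - m + 1) then k + n - 1
       else if (p = n - m ∧ q = n + 1) ∨ (q = n - m ∧ p = n + 1) then 1
       else if (p = n - m + 1 ∧ q = n + 1) ∨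
               (q = n - m + 1 ∧ p = n + 1) then -1
       else 0))
    (h : Fin (n + 1) → ℂ)
    (hh : ∀ i : Fin (n + 1), h i =
      (let p := (i : ℕ) + 1
       if p ≤ n - m then (p : ℂ) / n
       else if p ≤ n then ((p : ℂ) - n - 1) / n
       else l)) :
    Γ.mulVec h = (fun i : Fin (n + 1) => if (i : ℕ) = n then 1 else 0) ∧
    dotProduct h (Γ.mulVec h) = l :=
  heisenberg_coords_nm_general n m hm1 hm2 k l hl Γ hΓ h hh
end

section
/- Fix z ∈ ℂ and a ∈ ℂ. Define a sequence of functions f_j : ℂ → ℂ by f_0(w) = (z − w)⁻¹ and f_{j+1}(w) = a · (d/dw) f_j(w) − (z − w)⁻¹ · f_j(w). Then for every natural number j and every w ∈ ℂ with w ≠ z, f_j(w) = (∏_{i=1}^{j} (i·a − 1)) · (z − w)^{−(j+1)}. -/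
/-! Since `a · d/dw (z - w)^{-(j+1)} = (j+1) a (z - w)^{-(j+2)}`, each step of the recursion multiplies
the coefficient of the pure pole by `(j+1) a - 1` and raises its order by one. The induction
hypothesis only holds off `z`, so the derivative is read off its local form near `w`. -/

open Topology

theorem hasDerivAt_inv_sub_pow {𝕜 : Type*} [NontriviallyNormedField 𝕜] {z w : 𝕜} (hw : w ≠ z)
    (n : ℕ) : HasDerivAt (fun u => (z - u)⁻¹ ^ n) (n * (z - w)⁻¹ ^ (n + 1)) w := by
  have hinv : HasDerivAt (fun u => (z - u)⁻¹) ((z - w)⁻¹ ^ 2) w := by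
    refine (((hasDerivAt_id' w).const_sub z).fun_inv (sub_ne_zero.mpr hw.symm)).congr_deriv ?_
    simp [inv_pow]
  refine (hinv.fun_pow n).congr_deriv ?_
  rcases n with _ | n
  · simp
  · rw [Nat.add_sub_cancel]
    ring

/-- The computation producing the central term `λ_{n-1}(n,k)` in the OPE
`ℰ(z)ℱ(w)`: if `f_0(w) = (z-w)⁻¹` and
`f_{j+1}(w) = a·f_j'(w) - (z-w)⁻¹·f_j(w)`, then for `w ≠ z`,
`f_j(w) = (∏_{i=1}^{j} (i·a - 1)) · ((z-w)⁻¹)^{j+1}`. -/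
theorem iterated_miura_factor (z a : ℂ) (f : ℕ → ℂ → ℂ)
    (h0 : ∀ w, f 0 w = (z - w)⁻¹)
    (hstep : ∀ j w, f (j + 1) w = a * deriv (f j) w - (z - w)⁻¹ * f j w) :
    ∀ (j : ℕ) (w : ℂ), w ≠ z →
      f j w = (∏ i ∈ Finset.Icc 1 j, ((i : ℂ) * a - 1)) * ((z - w)⁻¹) ^ (j + 1) := by
  intro j
  induction j with
  | zero => intro w _; simpa using h0 w
  | succ j ih =>
    intro w hw
    set c := ∏ i ∈ Finset.Icc 1 j, ((i : ℂ) * a - 1)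
    have hderiv : deriv (f j) w = c * ((j + 1 : ℕ) * (z - w)⁻¹ ^ (j + 2)) := by
      have hfj : f j =ᶠ[𝓝 w] fun u => c * (z - u)⁻¹ ^ (j + 1) :=
        (eventually_ne_nhds hw).mono ih
      rw [hfj.deriv_eq]
      exact ((hasDerivAt_inv_sub_pow hw (j + 1)).const_mul c).deriv
    rw [hstep, hderiv, ih w hw, Finset.prod_Icc_succ_top (by omega)]
    push_cast
    ring
end
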